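/- arXiv:1701.00337 — 4 statements merged into one kernel-verified Lean document; each statement's English description precedes it below -/
import Mathlib

section
/- Let F be an IFS on a compact metric space that expands small distances with constants α > 1 and δ₀ > 0. Then F is an open IFS (each f_λ is an open map) if and only if there exists 0 < δ₁ < δ₀/2 such that for all λ ∈ Λ and x, y ∈ X, d(f_λ(x), y) < α·δ₁ implies B_{δ₁}(x) ∩ f_λ^{-1}({y}) ≠ ∅. -/
open Metric Filter Topology

noncomputable section

/-- Forward composition along a symbol sequence: `F_{σ_n} = f_{λ_{n-1}} ∘ ⋯ ∘ f_{λ_0}`. -/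
def fwdComp {X Λ : Type*} [TopologicalSpace X] (f : Λ → X ≃ₜ X) (σ : ℤ → Λ) : ℕ → X → X
  | 0 => id
  | n + 1 => (f (σ (n : ℤ))) ∘ fwdComp f σ n

/-- Backward composition: `F_{σ_{-n}} = f_{λ_{-n}}⁻¹ ∘ ⋯ ∘ f_{λ_{-1}}⁻¹`. -/
def bwdComp {X Λ : Type*} [TopologicalSpace X] (f : Λ → X ≃ₜ X) (σ : ℤ → Λ) : ℕ → X → X
  | 0 => id
  | n + 1 => ((f (σ (-(n + 1 : ℕ) : ℤ))).symm : X → X) ∘ bwdComp f σ n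

/-- `IFSComp f σ i = F_{σ_i}`. -/
def IFSComp {X Λ : Type*} [TopologicalSpace X] (f : Λ → X ≃ₜ X) (σ : ℤ → Λ) (i : ℤ) : X → X :=
  if 0 ≤ i then fwdComp f σ i.toNat else bwdComp f σ (-i).toNat

/-- A two-sided δ-pseudo orbit along σ. -/
def IsPseudoOrbit {X Λ : Type*} [MetricSpace X] (f : Λ → X ≃ₜ X) (δ : ℝ) (x : ℤ → X)
    (σ : ℤ → Λ) : Prop :=
  ∀ i : ℤ, dist (f (σ i) (x i)) (x (i + 1)) < δ

/-- Expansivity with constant `e`. -/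
def ExpansiveWith {X Λ : Type*} [MetricSpace X] (f : Λ → X ≃ₜ X) (e : ℝ) : Prop :=
  ∀ (σ : ℤ → Λ) (x y : X), (∀ i : ℤ, dist (IFSComp f σ i x) (IFSComp f σ i y) < e) → x = y

/-- Strong expansivity with constant `e`. -/
def StronglyExpansiveWith {X Λ : Type*} [MetricSpace X] (f : Λ → X ≃ₜ X) (e : ℝ) : Prop :=
  ∀ (σ μ : ℤ → Λ) (x y : X), (∀ i : ℤ, dist (IFSComp f σ i x) (IFSComp f μ i y) < e) → x = y

/-- The shadowing property. -/
def HasShadowing {X Λ : Type*} [MetricSpace X] (f : Λ → X ≃ₜ X) : Prop :=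
  ∀ ε > (0 : ℝ), ∃ δ > (0 : ℝ), ∀ (x : ℤ → X) (σ : ℤ → Λ), IsPseudoOrbit f δ x σ →
    ∃ (y : X) (τ : ℤ → Λ), ∀ i : ℤ, dist (IFSComp f τ i y) (x i) ≤ ε

/-- The Lipschitz shadowing property. -/
def HasLipschitzShadowing {X Λ : Type*} [MetricSpace X] (f : Λ → X ≃ₜ X) : Prop :=
  ∃ L > (0 : ℝ), ∃ ε₀ > (0 : ℝ), ∀ ε : ℝ, 0 < ε → ε < ε₀ →
    ∀ (x : ℤ → X) (σ : ℤ → Λ), IsPseudoOrbit f ε x σ →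
      ∃ (y : X) (τ : ℤ → Λ), ∀ i : ℤ, dist (IFSComp f τ i y) (x i) < L * ε

/-- The limit shadowing property with respect to a distance function `D`. -/
def HasLimitShadowingWith {X Λ : Type*} [TopologicalSpace X] (f : Λ → X ≃ₜ X)
    (D : X → X → ℝ) : Prop :=
  ∀ (x : ℤ → X) (σ : ℤ → Λ),
    Tendsto (fun i : ℤ => D (f (σ i) (x i)) (x (i + 1))) atTop (nhds 0) →
    Tendsto (fun i : ℤ => D (f (σ i) (x i)) (x (i + 1))) atBot (nhds 0) →
    ∃ (y : X) (τ : ℤ → Λ),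
      Tendsto (fun i : ℤ => D (x i) (IFSComp f τ i y)) atTop (nhds 0) ∧
      Tendsto (fun i : ℤ => D (x i) (IFSComp f τ i y)) atBot (nhds 0)

/-- The metric `d̃` on sequences. -/
def dTilde {X : Type*} [MetricSpace X] (x y : ℤ → X) : ℝ :=
  ⨆ i : ℤ, dist (x i) (y i) / 2 ^ i.natAbs

/-- The continuous shadowing property. -/
def HasContinuousShadowing {X Λ : Type*} [MetricSpace X] (f : Λ → X ≃ₜ X) : Prop :=
  ∀ ε > (0 : ℝ), ∃ δ > (0 : ℝ),
    ∃ r : {p : (ℤ → X) × (ℤ → Λ) // IsPseudoOrbit f δ p.1 p.2} → X,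
      (∀ p, ∀ i : ℤ, dist (IFSComp f p.val.2 i (r p)) (p.val.1 i) < ε) ∧
      (∀ p, ∀ α > (0 : ℝ), ∃ β > (0 : ℝ), ∀ q, dTilde p.val.1 q.val.1 < β →
        dist (r p) (r q) < α)
/-- Forward composition for a family of plain maps. -/
def fwdCompN {X Λ : Type*} (f : Λ → X → X) (σ : ℕ → Λ) : ℕ → X → X
  | 0 => id
  | n + 1 => f (σ n) ∘ fwdCompN f σ n

/-- A two-sided δ-pseudo orbit for a family of plain maps. -/
def IsPseudoOrbitF {X Λ : Type*} [MetricSpace X] (f : Λ → X → X) (δ : ℝ) (x : ℤ → X)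
    (σ : ℤ → Λ) : Prop :=
  ∀ i : ℤ, dist (f (σ i) (x i)) (x (i + 1)) < δ

/-- A two-sided true orbit for a family of plain maps. -/
def IsOrbitSeq {X Λ : Type*} (f : Λ → X → X) (y : ℤ → X) (τ : ℤ → Λ) : Prop :=
  ∀ i : ℤ, y (i + 1) = f (τ i) (y i)

/-- Shadowing property, orbits given as sequences. -/
def HasShadowingF {X Λ : Type*} [MetricSpace X] (f : Λ → X → X) : Prop :=
  ∀ ε > (0 : ℝ), ∃ δ > (0 : ℝ), ∀ (x : ℤ → X) (σ : ℤ → Λ), IsPseudoOrbitF f δ x σ →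
    ∃ (y : ℤ → X) (τ : ℤ → Λ), IsOrbitSeq f y τ ∧ ∀ i : ℤ, dist (x i) (y i) ≤ ε

/-- Lipschitz shadowing property, orbits given as sequences. -/
def HasLipschitzShadowingF {X Λ : Type*} [MetricSpace X] (f : Λ → X → X) : Prop :=
  ∃ L > (0 : ℝ), ∃ ε₀ > (0 : ℝ), ∀ ε : ℝ, 0 < ε → ε < ε₀ →
    ∀ (x : ℤ → X) (σ : ℤ → Λ), IsPseudoOrbitF f ε x σ →
      ∃ (y : ℤ → X) (τ : ℤ → Λ), IsOrbitSeq f y τ ∧ ∀ i : ℤ, dist (x i) (y i) < L * ε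


/-! An open continuous map on a compact space is uniformly open: the pairs `(x, g z)` with
`dist z x < η` form an open neighbourhood of the compact graph of `g`, so they contain a uniform
thickening of it. Expansion of small distances then shrinks the preimage ball from radius `η` to
radius `δ₁` whenever `α δ₁` is below the uniform radius. Conversely, the lifting property together
with expansion gives `ball (g x) (α r) ⊆ g '' ball x r` for all `r ≤ δ₁`, which is openness. -/

section Expanding

variable {X : Type*} [MetricSpace X]

def ExpandsSmallDistances (g : X → X) (δ₀ α : ℝ) : Prop :=
  ∀ x y, 0 < dist x y → dist x y < δ₀ → α * dist x y < dist (g x) (g y)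

theorem ExpandsSmallDistances.mul_dist_le {g : X → X} {δ₀ α : ℝ}
    (hg : ExpandsSmallDistances g δ₀ α) {x y : X} (h : dist x y < δ₀) :
    α * dist x y ≤ dist (g x) (g y) := by
  rcases eq_or_ne x y with rfl | hxy
  · simp
  · exact (hg x y (dist_pos.2 hxy) h).le

theorem ExpandsSmallDistances.ball_subset_image_ball {g : X → X} {δ₀ α η r : ℝ}
    (hg : ExpandsSmallDistances g δ₀ α) (hα : 0 < α) (hη : η ≤ δ₀) {x : X}
    (hlift : ball (g x) (α * r) ⊆ g '' ball x η) :
    ball (g x) (α * r) ⊆ g '' ball x r := by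
  intro y hy
  obtain ⟨z, hz, rfl⟩ := hlift hy
  refine ⟨z, ?_, rfl⟩
  have hxz : dist x z < δ₀ := by rw [dist_comm]; exact hz.trans_le hη
  rw [mem_ball, dist_comm] at hy ⊢
  exact lt_of_mul_lt_mul_left ((hg.mul_dist_le hxz).trans_lt hy) hα.le

end Expanding

theorem isOpenMap_of_forall_ball_subset_image_ball {X Y : Type*} [MetricSpace X] [MetricSpace Y]
    {g : X → Y} (h : ∀ x, ∀ r > 0, ∃ ε > 0, ball (g x) ε ⊆ g '' ball x r) : IsOpenMap g :=
  IsOpenMap.of_nhds_le fun x => (nhds_basis_ball.le_basis_iff (nhds_basis_ball.map g)).2 (h x)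

theorem IsOpenMap.eventually_ball_subset_image_ball {X Y : Type*} [MetricSpace X] [CompactSpace X]
    [MetricSpace Y] {g : X → Y} (hg : Continuous g) (ho : IsOpenMap g) {η : ℝ} (hη : 0 < η) :
    ∀ᶠ δ in 𝓝[>] 0, ∀ x, ball (g x) δ ⊆ g '' ball x η := by
  set U := Prod.map id g '' {p : X × X | dist p.2 p.1 < η}
  have hU : IsOpen U := (IsOpenMap.id.prodMap ho) _ (isOpen_lt (by fun_prop) continuous_const)
  have hgraph : Set.range (fun x => (x, g x)) ⊆ U := by
    rintro _ ⟨x, rfl⟩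
    exact ⟨(x, x), by simpa using hη, rfl⟩
  obtain ⟨δ, hδ, hδU⟩ :=
    (isCompact_range (continuous_id.prodMk hg)).exists_thickening_subset_open hU hgraph
  filter_upwards [Ioo_mem_nhdsGT hδ] with δ' hδ' x y hy
  have hxy : (x, y) ∈ thickening δ (Set.range (fun x => (x, g x))) := by
    refine mem_thickening_iff.2 ⟨(x, g x), Set.mem_range_self x, ?_⟩
    simpa [Prod.dist_eq] using (mem_ball.1 hy).trans hδ'.2
  obtain ⟨⟨x', z⟩, hz, hxz⟩ := hδU hxy
  obtain ⟨rfl, rfl⟩ := Prod.ext_iff.1 hxz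
  exact ⟨z, hz, rfl⟩

theorem stmt_3_general {X Λ : Type*} [MetricSpace X] [CompactSpace X] [Finite Λ]
    (f : Λ → X → X) (hf : ∀ l, Continuous (f l)) (δ₀ α : ℝ) (hδ₀ : 0 < δ₀) (hα : 1 < α)
    (hexp : ∀ (l : Λ) (x y : X), 0 < dist x y → dist x y < δ₀ →
      α * dist x y < dist (f l x) (f l y)) :
    (∀ l, IsOpenMap (f l)) ↔
      ∃ δ₁ : ℝ, 0 < δ₁ ∧ δ₁ < δ₀ / 2 ∧
        ∀ (l : Λ) (x : X) (y : X), dist (f l x) y < α * δ₁ →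
          (Metric.ball x δ₁ ∩ f l ⁻¹' {y}).Nonempty := by
  have hα₀ : 0 < α := one_pos.trans hα
  have hexp' : ∀ l, ExpandsSmallDistances (f l) δ₀ α := hexp
  constructor
  · intro hopen
    obtain ⟨δ, hball, hδ⟩ := ((eventually_all.2 fun l =>
      (hopen l).eventually_ball_subset_image_ball (hf l) (div_pos hδ₀ four_pos)).and
        self_mem_nhdsWithin).exists
    have hαδ₁ : α * min (δ / α) (δ₀ / 4) ≤ δ :=
      (mul_le_mul_of_nonneg_left (min_le_left _ _) hα₀.le).trans (mul_div_cancel₀ δ hα₀.ne').le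
    refine ⟨min (δ / α) (δ₀ / 4), lt_min (div_pos hδ hα₀) (by linarith),
      (min_le_right _ _).trans_lt (by linarith), fun l x y hy => ?_⟩
    obtain ⟨z, hz, rfl⟩ := (hexp' l).ball_subset_image_ball hα₀ (by linarith)
      ((ball_subset_ball hαδ₁).trans (hball l x)) (mem_ball_comm.1 hy)
    exact ⟨z, hz, rfl⟩
  · rintro ⟨δ₁, hδ₁, hδ₁δ₀, hlift⟩ l
    refine isOpenMap_of_forall_ball_subset_image_ball fun x r hr =>
      ⟨α * min r δ₁, mul_pos hα₀ (lt_min hr hδ₁), ?_⟩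
    have hlift' : ball (f l x) (α * min r δ₁) ⊆ f l '' ball x δ₁ := fun y hy =>
      let ⟨z, hz, hfz⟩ := hlift l x y (mem_ball_comm.1 hy |>.trans_le
        (mul_le_mul_of_nonneg_left (min_le_right _ _) hα₀.le))
      ⟨z, hz, hfz⟩
    exact ((hexp' l).ball_subset_image_ball hα₀ (by linarith) hlift').trans
      (Set.image_mono (ball_subset_ball (min_le_left _ _)))

/-- For an IFS expanding small distances with constants α > 1, δ₀ > 0:
openness is equivalent to the δ₁-lifting property. -/
theorem stmt_3 {X Λ : Type*} [MetricSpace X] [CompactSpace X] [Finite Λ] [Nonempty Λ]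
    (f : Λ → X → X) (hf : ∀ l, Continuous (f l)) (δ₀ α : ℝ) (hδ₀ : 0 < δ₀) (hα : 1 < α)
    (hexp : ∀ (l : Λ) (x y : X), 0 < dist x y → dist x y < δ₀ →
      α * dist x y < dist (f l x) (f l y)) :
    (∀ l, IsOpenMap (f l)) ↔
      ∃ δ₁ : ℝ, 0 < δ₁ ∧ δ₁ < δ₀ / 2 ∧
        ∀ (l : Λ) (x : X) (y : X), dist (f l x) y < α * δ₁ →
          (Metric.ball x δ₁ ∩ f l ⁻¹' {y}).Nonempty :=
  stmt_3_general f hf δ₀ α hδ₀ hα hexp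
end
end

section
/- If F = {f_λ | λ ∈ Λ} is an expansive IFS of homeomorphisms on a compact metric space, then there exist a compatible metric D on X and K ≥ 1 such that for all x, y ∈ X and all λ ∈ Λ, D(f_λ(x), f_λ(y)) ≤ K·D(x,y) and D(f_λ^{-1}(x), f_λ^{-1}(y)) ≤ K·D(x,y). -/
open Metric Filter Topology

noncomputable section

/-- Both f_l and its inverse are K-Lipschitz with respect to the distance d´. -/
def AdaptedLipschitz {X Λ : Type*} [TopologicalSpace X] (f : Λ → X ≃ₜ X)
    (d' : X → X → ℝ) (K : ℝ) : Prop :=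
  ∀ (l : Λ) (x y : X), d' (f l x) (f l y) ≤ K * d' x y ∧
    d' ((f l).symm x) ((f l).symm y) ≤ K * d' x y

section StmtSevenAux

variable {X Λ : Type*} [MetricSpace X] [Fintype Λ]

/-- The generators and their inverses. -/
def actIFS (f : Λ → X ≃ₜ X) (g : Λ × Bool) : X ≃ₜ X := if g.2 then f g.1 else (f g.1).symm

/-- Truncated metric. -/
def mTrunc (x y : X) : ℝ := min (dist x y) 1

lemma mTrunc_nonneg (x y : X) : 0 ≤ mTrunc x y := le_min dist_nonneg one_pos.le

lemma mTrunc_le_one (x y : X) : mTrunc x y ≤ 1 := min_le_right _ _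

lemma mTrunc_comm (x y : X) : mTrunc x y = mTrunc y x := by rw [mTrunc, mTrunc, dist_comm]

lemma mTrunc_self (x : X) : mTrunc x x = 0 := by simp [mTrunc]

lemma mTrunc_tri (x y z : X) : mTrunc x z ≤ mTrunc x y + mTrunc y z := by
  rcases le_total 1 (dist x y) with h | h
  · calc mTrunc x z ≤ 1 := mTrunc_le_one x z
      _ = mTrunc x y := (min_eq_right h).symm
      _ ≤ mTrunc x y + mTrunc y z := le_add_of_nonneg_right (mTrunc_nonneg _ _)
  · rcases le_total 1 (dist y z) with h' | h'
    · calc mTrunc x z ≤ 1 := mTrunc_le_one x z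
        _ = mTrunc y z := (min_eq_right h').symm
        _ ≤ mTrunc x y + mTrunc y z := le_add_of_nonneg_left (mTrunc_nonneg _ _)
    · calc mTrunc x z ≤ dist x z := min_le_left _ _
        _ ≤ dist x y + dist y z := dist_triangle _ _ _
        _ = mTrunc x y + mTrunc y z := by rw [mTrunc, mTrunc, min_eq_left h, min_eq_left h']

lemma mTrunc_cont : Continuous fun p : X × X => mTrunc p.1 p.2 :=
  continuous_dist.min continuous_const

/-- Sup (here: sum) of truncated distances over words of bounded length. -/
def EnF (f : Λ → X ≃ₜ X) : ℕ → X → X → ℝ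
  | 0 => mTrunc
  | n + 1 => fun x y => mTrunc x y + ∑ g : Λ × Bool, EnF f n (actIFS f g x) (actIFS f g y)

/-- The growth constant. -/
def cIFS (Λ : Type*) [Fintype Λ] : ℝ := (Fintype.card (Λ × Bool) : ℝ) + 1

lemma one_le_cIFS : (1 : ℝ) ≤ cIFS Λ := by
  have : (0 : ℝ) ≤ (Fintype.card (Λ × Bool) : ℝ) := Nat.cast_nonneg _
  simp only [cIFS]; linarith

lemma cIFS_pos : (0 : ℝ) < cIFS Λ := lt_of_lt_of_le one_pos one_le_cIFS

/-- The weight. -/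
def wgt (Λ : Type*) [Fintype Λ] : ℝ := 1 / (2 * cIFS Λ)

lemma wgt_pos : (0 : ℝ) < wgt Λ := by
  have := cIFS_pos (Λ := Λ); rw [wgt]; positivity

lemma two_cIFS_wgt : 2 * cIFS Λ * wgt Λ = 1 := by
  have := cIFS_pos (Λ := Λ); rw [wgt]; field_simp

lemma wgt_cIFS : wgt Λ * cIFS Λ = 1 / 2 := by
  have := cIFS_pos (Λ := Λ); rw [wgt]; field_simp

variable (f : Λ → X ≃ₜ X)

lemma EnF_nonneg : ∀ n (x y : X), 0 ≤ EnF f n x y := by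
  intro n
  induction n with
  | zero => exact fun x y => mTrunc_nonneg x y
  | succ n ih =>
    intro x y
    simp only [EnF]
    exact add_nonneg (mTrunc_nonneg _ _) (Finset.sum_nonneg fun g _ => ih _ _)

lemma EnF_comm : ∀ n (x y : X), EnF f n x y = EnF f n y x := by
  intro n
  induction n with
  | zero => exact fun x y => mTrunc_comm x y
  | succ n ih =>
    intro x y
    simp only [EnF, mTrunc_comm x y]
    congr 1
    exact Finset.sum_congr rfl fun g _ => ih _ _

lemma EnF_self : ∀ n (x : X), EnF f n x x = 0 := by
  intro n
  induction n with
  | zero => exact fun x => mTrunc_self x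
  | succ n ih =>
    intro x
    simp only [EnF, mTrunc_self]
    rw [zero_add]
    exact Finset.sum_eq_zero fun g _ => ih _

lemma EnF_tri : ∀ n (x y z : X), EnF f n x z ≤ EnF f n x y + EnF f n y z := by
  intro n
  induction n with
  | zero => exact fun x y z => mTrunc_tri x y z
  | succ n ih =>
    intro x y z
    simp only [EnF]
    have h := Finset.sum_le_sum (s := (Finset.univ : Finset (Λ × Bool)))
      (fun g _ => ih (actIFS f g x) (actIFS f g y) (actIFS f g z))
    rw [Finset.sum_add_distrib] at h
    have h2 := mTrunc_tri x y z
    linarith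

lemma EnF_le_pow : ∀ n (x y : X), EnF f n x y ≤ cIFS Λ ^ n := by
  intro n
  induction n with
  | zero => intro x y; simpa [EnF] using mTrunc_le_one x y
  | succ n ih =>
    intro x y
    simp only [EnF]
    have hc : (1 : ℝ) ≤ cIFS Λ ^ n := one_le_pow₀ one_le_cIFS
    have hsum : ∑ g : Λ × Bool, EnF f n (actIFS f g x) (actIFS f g y)
        ≤ ∑ _g : Λ × Bool, cIFS Λ ^ n := Finset.sum_le_sum fun g _ => ih _ _
    rw [Finset.sum_const, Finset.card_univ, nsmul_eq_mul] at hsum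
    have hm := mTrunc_le_one x y
    have hpow : cIFS Λ ^ (n + 1) = (Fintype.card (Λ × Bool) : ℝ) * cIFS Λ ^ n + cIFS Λ ^ n := by
      rw [pow_succ]; simp only [cIFS]; ring
    linarith

lemma EnF_cont : ∀ n, Continuous fun p : X × X => EnF f n p.1 p.2 := by
  intro n
  induction n with
  | zero => exact mTrunc_cont
  | succ n ih =>
    simp only [EnF]
    exact mTrunc_cont.add (continuous_finset_sum _ fun g _ =>
      ih.comp (((actIFS f g).continuous.comp continuous_fst).prodMk
        ((actIFS f g).continuous.comp continuous_snd)))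

lemma EnF_step (n : ℕ) (g : Λ × Bool) (x y : X) :
    EnF f n (actIFS f g x) (actIFS f g y) ≤ EnF f (n + 1) x y := by
  have h1 : EnF f n (actIFS f g x) (actIFS f g y) ≤
      ∑ g' : Λ × Bool, EnF f n (actIFS f g' x) (actIFS f g' y) :=
    Finset.single_le_sum (f := fun g' : Λ × Bool => EnF f n (actIFS f g' x) (actIFS f g' y))
      (fun g' _ => EnF_nonneg f n _ _) (Finset.mem_univ g)
  calc EnF f n (actIFS f g x) (actIFS f g y)
      ≤ ∑ g' : Λ × Bool, EnF f n (actIFS f g' x) (actIFS f g' y) := h1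
    _ ≤ EnF f (n + 1) x y := by
        simp only [EnF]; exact le_add_of_nonneg_left (mTrunc_nonneg _ _)

end StmtSevenAux

section StmtSevenDD

variable {X Λ : Type*} [MetricSpace X] [Fintype Λ] (f : Λ → X ≃ₜ X)

/-- The adapted distance. -/
def DDist (x y : X) : ℝ := ∑' n : ℕ, wgt Λ ^ n * EnF f n x y

lemma DD_term_nonneg (n : ℕ) (x y : X) : 0 ≤ wgt Λ ^ n * EnF f n x y :=
  mul_nonneg (pow_nonneg (wgt_pos (Λ := Λ)).le n) (EnF_nonneg f n x y)

lemma DD_term_le (n : ℕ) (x y : X) : wgt Λ ^ n * EnF f n x y ≤ (1 / 2 : ℝ) ^ n := by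
  calc wgt Λ ^ n * EnF f n x y ≤ wgt Λ ^ n * cIFS Λ ^ n :=
        mul_le_mul_of_nonneg_left (EnF_le_pow f n x y) (pow_nonneg (wgt_pos (Λ := Λ)).le n)
    _ = (1 / 2 : ℝ) ^ n := by rw [← mul_pow, wgt_cIFS]

lemma summable_half : Summable fun n : ℕ => (1 / 2 : ℝ) ^ n :=
  summable_geometric_of_lt_one (by norm_num) (by norm_num)

lemma summable_DD (x y : X) : Summable fun n : ℕ => wgt Λ ^ n * EnF f n x y :=
  Summable.of_nonneg_of_le (fun n => DD_term_nonneg f n x y) (fun n => DD_term_le f n x y)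
    summable_half

lemma summable_DD_shift (x y : X) : Summable fun n : ℕ => wgt Λ ^ n * EnF f (n + 1) x y := by
  refine Summable.of_nonneg_of_le
    (fun n => mul_nonneg (pow_nonneg (wgt_pos (Λ := Λ)).le n) (EnF_nonneg f (n + 1) x y))
    (fun n => ?_) (summable_half.mul_left (cIFS Λ))
  calc wgt Λ ^ n * EnF f (n + 1) x y ≤ wgt Λ ^ n * cIFS Λ ^ (n + 1) :=
        mul_le_mul_of_nonneg_left (EnF_le_pow f (n + 1) x y)
          (pow_nonneg (wgt_pos (Λ := Λ)).le n)
    _ = cIFS Λ * (1 / 2 : ℝ) ^ n := by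
        rw [pow_succ, ← mul_assoc, ← mul_pow, wgt_cIFS]; ring

lemma DD_self (x : X) : DDist f x x = 0 := by
  simp [DDist, EnF_self]

lemma DD_comm (x y : X) : DDist f x y = DDist f y x :=
  tsum_congr fun n => by rw [EnF_comm]

lemma DD_tri (x y z : X) : DDist f x z ≤ DDist f x y + DDist f y z := by
  calc DDist f x z
      ≤ ∑' n : ℕ, (wgt Λ ^ n * EnF f n x y + wgt Λ ^ n * EnF f n y z) := by
        refine Summable.tsum_le_tsum (fun n => ?_) (summable_DD f x z)
          ((summable_DD f x y).add (summable_DD f y z))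
        rw [← mul_add]
        exact mul_le_mul_of_nonneg_left (EnF_tri f n x y z)
          (pow_nonneg (wgt_pos (Λ := Λ)).le n)
    _ = DDist f x y + DDist f y z := Summable.tsum_add (summable_DD f x y) (summable_DD f y z)

lemma mTrunc_le_DD (x y : X) : mTrunc x y ≤ DDist f x y := by
  have h := Summable.le_tsum (summable_DD f x y) 0 (fun j _ => DD_term_nonneg f j x y)
  simpa [EnF, DDist] using h

lemma DD_eq_of (x y : X) (h : DDist f x y = 0) : x = y := by
  by_contra hne
  have hd : 0 < dist x y := dist_pos.2 hne
  have hm : 0 < mTrunc x y := lt_min hd one_pos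
  have := mTrunc_le_DD f x y
  linarith

lemma DD_nonneg (x y : X) : 0 ≤ DDist f x y :=
  tsum_nonneg fun n => DD_term_nonneg f n x y

lemma DD_cont : Continuous fun p : X × X => DDist f p.1 p.2 := by
  refine continuous_tsum (f := fun n (p : X × X) => wgt Λ ^ n * EnF f n p.1 p.2)
    (u := fun n => (1 / 2 : ℝ) ^ n)
    (fun n => continuous_const.mul (EnF_cont f n)) summable_half (fun n p => ?_)
  rw [Real.norm_eq_abs, abs_of_nonneg (DD_term_nonneg f n p.1 p.2)]
  exact DD_term_le f n p.1 p.2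

lemma DD_lip (g : Λ × Bool) (x y : X) :
    DDist f (actIFS f g x) (actIFS f g y) ≤ 2 * cIFS Λ * DDist f x y := by
  have h1 : DDist f (actIFS f g x) (actIFS f g y)
      ≤ ∑' n : ℕ, wgt Λ ^ n * EnF f (n + 1) x y := by
    refine Summable.tsum_le_tsum (fun n => ?_) (summable_DD f _ _) (summable_DD_shift f x y)
    exact mul_le_mul_of_nonneg_left (EnF_step f n g x y)
      (pow_nonneg (wgt_pos (Λ := Λ)).le n)
  have h2 : ∑' n : ℕ, wgt Λ ^ n * EnF f (n + 1) x y
      = 2 * cIFS Λ * ∑' n : ℕ, wgt Λ ^ (n + 1) * EnF f (n + 1) x y := by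
    rw [← tsum_mul_left]
    refine tsum_congr fun n => ?_
    calc wgt Λ ^ n * EnF f (n + 1) x y
        = 2 * cIFS Λ * wgt Λ * (wgt Λ ^ n * EnF f (n + 1) x y) := by
          rw [two_cIFS_wgt, one_mul]
      _ = 2 * cIFS Λ * (wgt Λ ^ (n + 1) * EnF f (n + 1) x y) := by ring
  have h3 : ∑' n : ℕ, wgt Λ ^ (n + 1) * EnF f (n + 1) x y ≤ DDist f x y := by
    have hz := Summable.tsum_eq_zero_add (summable_DD f x y)
    have h0 : 0 ≤ wgt Λ ^ 0 * EnF f 0 x y := DD_term_nonneg f 0 x y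
    have : DDist f x y = wgt Λ ^ 0 * EnF f 0 x y
        + ∑' n : ℕ, wgt Λ ^ (n + 1) * EnF f (n + 1) x y := hz
    linarith
  calc DDist f (actIFS f g x) (actIFS f g y)
      ≤ ∑' n : ℕ, wgt Λ ^ n * EnF f (n + 1) x y := h1
    _ = 2 * cIFS Λ * ∑' n : ℕ, wgt Λ ^ (n + 1) * EnF f (n + 1) x y := h2
    _ ≤ 2 * cIFS Λ * DDist f x y := by
        have hc := cIFS_pos (Λ := Λ)
        exact mul_le_mul_of_nonneg_left h3 (by linarith)

end StmtSevenDD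

/-- For an expansive IFS of homeomorphisms on a compact metric space there
is a compatible metric D and K ≥ 1 making every f_λ and f_λ⁻¹ K-Lipschitz. -/
theorem stmt_7 {X Λ : Type*} [m : MetricSpace X] [CompactSpace X] [Finite Λ] [Nonempty Λ]
    (f : Λ → X ≃ₜ X) (hexp : ∃ e > (0 : ℝ), ExpansiveWith f e) :
    ∃ D : MetricSpace X,
      (@UniformSpace.toTopologicalSpace X
          (@PseudoMetricSpace.toUniformSpace X D.toPseudoMetricSpace) =
        @UniformSpace.toTopologicalSpace X
          (@PseudoMetricSpace.toUniformSpace X m.toPseudoMetricSpace)) ∧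
      ∃ K : ℝ, 1 ≤ K ∧
        @AdaptedLipschitz X Λ
          (@UniformSpace.toTopologicalSpace X
            (@PseudoMetricSpace.toUniformSpace X m.toPseudoMetricSpace))
          f (fun a b => @dist X D.toDist a b) K := by
  classical
  haveI : Fintype Λ := Fintype.ofFinite Λ
  -- the topological compatibility condition
  have H : ∀ s : Set X, IsOpen s ↔ ∀ x ∈ s, ∃ ε > 0, ∀ y, DDist f x y < ε → y ∈ s := by
    intro s
    constructor
    · intro hs x hx
      obtain ⟨ε, hε, hball⟩ := Metric.isOpen_iff.mp hs x hx
      refine ⟨min ε 1, lt_min hε one_pos, fun y hy => hball ?_⟩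
      have h1 : mTrunc x y ≤ DDist f x y := mTrunc_le_DD f x y
      have h2 : mTrunc x y < min ε 1 := lt_of_le_of_lt h1 hy
      have h3 : dist x y < ε := by
        rcases le_or_gt 1 (dist x y) with h | h
        · exfalso
          have hm1 : mTrunc x y = 1 := min_eq_right h
          have := min_le_right ε 1
          rw [hm1] at h2
          linarith
        · have hm1 : mTrunc x y = dist x y := min_eq_left h.le
          calc dist x y = mTrunc x y := hm1.symm
            _ < min ε 1 := h2
            _ ≤ ε := min_le_left _ _
      rw [Metric.mem_ball, dist_comm]
      exact h3
    · intro h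
      rw [Metric.isOpen_iff]
      intro x hx
      obtain ⟨ε, hε, hsub⟩ := h x hx
      have hcx : Continuous fun y : X => DDist f x y :=
        (DD_cont f).comp (continuous_const.prodMk continuous_id)
      have hopen : IsOpen {y : X | DDist f x y < ε} := isOpen_lt hcx continuous_const
      have hmem : x ∈ {y : X | DDist f x y < ε} := by
        simp only [Set.mem_setOf_eq, DD_self]
        exact hε
      obtain ⟨δ, hδ, hb⟩ := Metric.isOpen_iff.mp hopen x hmem
      exact ⟨δ, hδ, fun _ hy => hsub _ (hb hy)⟩
  refine ⟨MetricSpace.ofDistTopology (DDist f) (DD_self f) (DD_comm f)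
    (DD_tri f) H (DD_eq_of f), rfl, 2 * cIFS Λ, ?_, ?_⟩
  · have := one_le_cIFS (Λ := Λ)
    linarith
  · intro l x y
    constructor
    · have h : DDist f (f l x) (f l y) ≤ 2 * cIFS Λ * DDist f x y := by
        simpa [actIFS] using DD_lip f (l, true) x y
      exact h
    · have h : DDist f ((f l).symm x) ((f l).symm y) ≤ 2 * cIFS Λ * DDist f x y := by
        simpa [actIFS] using DD_lip f (l, false) x y
      exact h
end
end

section
/- Let F = {f_λ | λ ∈ Λ} be an expansive IFS of homeomorphisms on a compact metric space with the limit (respectively Lipschitz) shadowing property. Then the inverse IFS F⁻¹ = {f_λ^{-1} | λ ∈ Λ} also has the limit (respectively Lipschitz) shadowing property. -/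
open Metric Filter Topology

noncomputable section

/-! Reversing time turns a pseudo-orbit `x` of `F⁻¹` along `σ` into the pseudo-orbit
`i ↦ f_{σ(-i-1)}⁻¹ (x (-i-1))` of `F` along `i ↦ σ(-i-1)`, with the same errors and without any
appeal to continuity, thanks to the shift by one step; and orbits of `F` read backwards are orbits
of `F⁻¹`. Shadowing the reversed pseudo-orbit by `F` and reading the shadowing orbit backwards
shadows `x` up to one more pseudo-orbit error, which is enough for limit shadowing and for
Lipschitz shadowing with constant `L + 1`. -/

lemma Int.tendsto_cofinite_iff {α : Type*} {u : ℤ → α} {l : Filter α} :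
    Tendsto u cofinite l ↔ Tendsto u atTop l ∧ Tendsto u atBot l := by
  rw [Int.cofinite_eq, tendsto_sup, and_comm]

section Reversal

variable {X Λ : Type*}

def reverseSymbols (σ : ℤ → Λ) : ℤ → Λ := fun i => σ (-i - 1)

def reversePseudoOrbit [TopologicalSpace X] (f : Λ → X ≃ₜ X) (x : ℤ → X) (σ : ℤ → Λ) :
    ℤ → X :=
  fun i => (f (σ (-i - 1))).symm (x (-i - 1))

section Composition

variable [TopologicalSpace X] (f : Λ → X ≃ₜ X) (τ : ℤ → Λ)

lemma fwdComp_symm_reverseSymbols (n : ℕ) :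
    fwdComp (fun l => (f l).symm) (reverseSymbols τ) n = bwdComp f τ n := by
  induction n with
  | zero => rfl
  | succ n ih =>
    have h : -(n : ℤ) - 1 = -((n + 1 : ℕ) : ℤ) := by push_cast; ring
    simp only [fwdComp, bwdComp, reverseSymbols, ih, h]

lemma bwdComp_symm_reverseSymbols (n : ℕ) :
    bwdComp (fun l => (f l).symm) (reverseSymbols τ) n = fwdComp f τ n := by
  induction n with
  | zero => rfl
  | succ n ih =>
    have h : -(-((n + 1 : ℕ) : ℤ)) - 1 = (n : ℤ) := by push_cast; ring
    simp only [fwdComp, bwdComp, reverseSymbols, ih, h, Homeomorph.symm_symm]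

lemma IFSComp_symm_reverseSymbols (i : ℤ) :
    IFSComp (fun l => (f l).symm) (reverseSymbols τ) i = IFSComp f τ (-i) := by
  unfold IFSComp
  rcases lt_trichotomy i 0 with h | rfl | h
  · rw [if_neg (not_le.mpr h), if_pos (by omega)]
    exact bwdComp_symm_reverseSymbols f τ _
  · rfl
  · rw [if_pos h.le, if_neg (by omega), neg_neg]
    exact fwdComp_symm_reverseSymbols f τ _

end Composition

variable [MetricSpace X] (f : Λ → X ≃ₜ X)

section PseudoOrbit

variable (x : ℤ → X) (σ : ℤ → Λ)

lemma dist_step_reversePseudoOrbit (i : ℤ) :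
    dist (f (reverseSymbols σ i) (reversePseudoOrbit f x σ i)) (reversePseudoOrbit f x σ (i + 1))
      = dist ((f (σ (-i - 2))).symm (x (-i - 2))) (x (-i - 2 + 1)) := by
  have h₁ : -(i + 1) - 1 = -i - 2 := by ring
  have h₂ : -i - 2 + 1 = -i - 1 := by ring
  rw [reverseSymbols, reversePseudoOrbit, reversePseudoOrbit, Homeomorph.apply_symm_apply, h₁, h₂,
    dist_comm]

lemma IsPseudoOrbit.reverse {ε : ℝ} (hx : IsPseudoOrbit (fun l => (f l).symm) ε x σ) :
    IsPseudoOrbit f ε (reversePseudoOrbit f x σ) (reverseSymbols σ) :=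
  fun i => (dist_step_reversePseudoOrbit f x σ i).trans_lt (hx (-i - 2))

lemma dist_IFSComp_symm_reverseSymbols_le (τ : ℤ → Λ) (y : X) (j : ℤ) :
    dist (x j) (IFSComp (fun l => (f l).symm) (reverseSymbols τ) j y)
      ≤ dist ((f (σ (j - 1))).symm (x (j - 1))) (x j)
        + dist (reversePseudoOrbit f x σ (-j)) (IFSComp f τ (-j) y) := by
  have h : -(-j) - 1 = j - 1 := by ring
  rw [IFSComp_symm_reverseSymbols, reversePseudoOrbit, h]
  exact dist_triangle_left _ _ _

end PseudoOrbit

theorem HasLimitShadowingWith.symm (hf : HasLimitShadowingWith f dist) :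
    HasLimitShadowingWith (fun l => (f l).symm) dist := by
  intro x σ hTop hBot
  have herr : Tendsto (fun i => dist ((f (σ i)).symm (x i)) (x (i + 1))) cofinite (𝓝 0) :=
    Int.tendsto_cofinite_iff.2 ⟨hTop, hBot⟩
  have hrev : Tendsto (fun i => dist (f (reverseSymbols σ i) (reversePseudoOrbit f x σ i))
      (reversePseudoOrbit f x σ (i + 1))) cofinite (𝓝 0) := by
    simp_rw [dist_step_reversePseudoOrbit]
    exact herr.comp ((sub_left_injective.comp neg_injective).tendsto_cofinite)
  obtain ⟨y, τ, hyTop, hyBot⟩ :=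
    hf _ _ (Int.tendsto_cofinite_iff.1 hrev).1 (Int.tendsto_cofinite_iff.1 hrev).2
  have hy : Tendsto (fun i => dist (reversePseudoOrbit f x σ i) (IFSComp f τ i y)) cofinite
      (𝓝 0) :=
    Int.tendsto_cofinite_iff.2 ⟨hyTop, hyBot⟩
  refine ⟨y, reverseSymbols τ, Int.tendsto_cofinite_iff.1 ?_⟩
  refine squeeze_zero (fun _ => dist_nonneg) (dist_IFSComp_symm_reverseSymbols_le f x σ τ y) ?_
  simpa only [Function.comp_def, sub_add_cancel, add_zero] using
    (herr.comp (sub_left_injective (b := (1 : ℤ))).tendsto_cofinite).add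
    (hy.comp neg_injective.tendsto_cofinite)

theorem HasLipschitzShadowing.symm (hf : HasLipschitzShadowing f) :
    HasLipschitzShadowing (fun l => (f l).symm) := by
  obtain ⟨L, hL, ε₀, hε₀, hsh⟩ := hf
  refine ⟨L + 1, by linarith, ε₀, hε₀, fun ε hε hεε₀ x σ hx => ?_⟩
  obtain ⟨y, τ, hy⟩ := hsh ε hε hεε₀ _ _ hx.reverse
  refine ⟨y, reverseSymbols τ, fun j => ?_⟩
  have hstep := hx (j - 1)
  rw [sub_add_cancel] at hstep
  calc dist (IFSComp (fun l => (f l).symm) (reverseSymbols τ) j y) (x j)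
      ≤ dist ((f (σ (j - 1))).symm (x (j - 1))) (x j)
        + dist (reversePseudoOrbit f x σ (-j)) (IFSComp f τ (-j) y) := by
        rw [dist_comm]; exact dist_IFSComp_symm_reverseSymbols_le f x σ τ y j
    _ < ε + L * ε := by rw [dist_comm (reversePseudoOrbit _ _ _ _)]; gcongr; exact hy (-j)
    _ = (L + 1) * ε := by ring

end Reversal

theorem stmt_14_general {X Λ : Type*} [MetricSpace X]
    (f : Λ → X ≃ₜ X) :
    (HasLimitShadowingWith f dist →
      HasLimitShadowingWith (fun l : Λ => (f l).symm) dist) ∧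
    (HasLipschitzShadowing f → HasLipschitzShadowing (fun l : Λ => (f l).symm)) :=
  ⟨HasLimitShadowingWith.symm f, HasLipschitzShadowing.symm f⟩

/-- For an expansive IFS of homeomorphisms, limit (resp. Lipschitz)
shadowing passes to the inverse IFS. -/
theorem stmt_14 {X Λ : Type*} [MetricSpace X] [CompactSpace X] [Finite Λ] [Nonempty Λ]
    (f : Λ → X ≃ₜ X) (hexp : ∃ e > (0 : ℝ), ExpansiveWith f e) :
    (HasLimitShadowingWith f dist →
      HasLimitShadowingWith (fun l : Λ => (f l).symm) dist) ∧
    (HasLipschitzShadowing f → HasLipschitzShadowing (fun l : Λ => (f l).symm)) :=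
  stmt_14_general f
end
end

section
/- Let F be a strongly expansive IFS on a compact metric space with the shadowing property, e its expansive constant, and 0 < ε < e/3 with associated δ from shadowing. Then the shadowing map r : p(F,δ) → X, sending a δ-pseudo orbit to the unique point whose orbit ε-shadows it, is well-defined and continuous with respect to the metric d̃((x_i),(y_i)) = sup_{i∈ℤ} d(x_i,y_i)/2^{|i|} on p(F,δ). -/
/-!
The shadowing point is unique because two points ε-shadowing the same pseudo orbit, along
any two symbol sequences, have orbits staying `2ε < e` apart, so strong expansivity identifies
them. Continuity follows by compactness: along an ultrafilter of pseudo orbits converging to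
`p` in `d̃` (hence coordinatewise), the shadowing points converge to some `z`, and since `Λ`
is finite the symbol sequences converge coordinatewise to some `τ`. As `F_{τ_i}` depends only
on finitely many symbols, `z` ε-shadows `p` along `τ`, so `z` is the shadowing point of `p`.
-/

open Metric Filter Topology

noncomputable section

section IFSComp

variable {X Λ : Type*} [TopologicalSpace X] (f : Λ → X ≃ₜ X)

lemma fwdComp_congr {σ τ : ℤ → Λ} (n : ℕ) (h : ∀ k : ℕ, k < n → σ k = τ k) :
    fwdComp f σ n = fwdComp f τ n := by
  induction n with
  | zero => rfl
  | succ m ih => simp only [fwdComp, ih fun k hk => h k (by omega), h m (by omega)]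

lemma bwdComp_congr {σ τ : ℤ → Λ} (n : ℕ)
    (h : ∀ k : ℕ, k < n → σ (-(k + 1 : ℕ) : ℤ) = τ (-(k + 1 : ℕ) : ℤ)) :
    bwdComp f σ n = bwdComp f τ n := by
  induction n with
  | zero => rfl
  | succ m ih => simp only [bwdComp, ih fun k hk => h k (by omega), h m (by omega)]

lemma IFSComp_congr {σ τ : ℤ → Λ} (i : ℤ)
    (h : ∀ j ∈ Finset.Icc (-(i.natAbs : ℤ)) i.natAbs, σ j = τ j) :
    IFSComp f σ i = IFSComp f τ i := by
  unfold IFSComp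
  split_ifs with hi
  · exact fwdComp_congr f _ fun k hk => h k (Finset.mem_Icc.2 ⟨by omega, by omega⟩)
  · exact bwdComp_congr f _ fun k hk => h _ (Finset.mem_Icc.2 ⟨by omega, by omega⟩)

lemma continuous_IFSComp (σ : ℤ → Λ) (i : ℤ) : Continuous (IFSComp f σ i) := by
  have hfwd : ∀ n, Continuous (fwdComp f σ n) := fun n => by
    induction n with
    | zero => exact continuous_id
    | succ m ih => exact (f _).continuous.comp ih
  have hbwd : ∀ n, Continuous (bwdComp f σ n) := fun n => by
    induction n with
    | zero => exact continuous_id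
    | succ m ih => exact (f _).symm.continuous.comp ih
  unfold IFSComp
  split_ifs
  exacts [hfwd _, hbwd _]

end IFSComp

section dTilde

variable {X : Type*} [MetricSpace X]

lemma dTilde_nonneg (x y : ℤ → X) : 0 ≤ dTilde x y :=
  Real.iSup_nonneg fun _ => div_nonneg dist_nonneg (by positivity)

lemma dist_le_two_pow_mul_dTilde [BoundedSpace X] (x y : ℤ → X) (i : ℤ) :
    dist (x i) (y i) ≤ 2 ^ i.natAbs * dTilde x y := by
  obtain ⟨C, hC⟩ := isBounded_iff.1 (Bornology.isBounded_univ.2 ‹BoundedSpace X›)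
  have hbdd : BddAbove (Set.range fun j : ℤ => dist (x j) (y j) / 2 ^ j.natAbs) :=
    ⟨C, Set.forall_mem_range.2 fun j =>
      (div_le_self dist_nonneg (one_le_pow₀ (by norm_num))).trans (hC trivial trivial)⟩
  rw [← div_le_iff₀' (by positivity)]
  exact le_ciSup hbdd i

lemma tendsto_apply_of_tendsto_dTilde [BoundedSpace X] {ι : Type*} {l : Filter ι}
    {x : ℤ → X} {xs : ι → ℤ → X} (h : Tendsto (fun n => dTilde x (xs n)) l (𝓝 0)) (i : ℤ) :
    Tendsto (fun n => xs n i) l (𝓝 (x i)) := by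
  rw [tendsto_iff_dist_tendsto_zero]
  refine squeeze_zero (fun _ => dist_nonneg) (fun n => ?_)
    (by simpa using h.const_mul (2 ^ i.natAbs))
  rw [dist_comm]
  exact dist_le_two_pow_mul_dTilde x (xs n) i

end dTilde

section Shadowing

variable {X Λ : Type*} [MetricSpace X] {f : Λ → X ≃ₜ X}

lemma StronglyExpansiveWith.eq_of_shadow {e ε : ℝ} (hexp : StronglyExpansiveWith f e)
    (hε : 2 * ε < e) {x : ℤ → X} {σ τ : ℤ → Λ} {y z : X}
    (hy : ∀ i, dist (IFSComp f σ i y) (x i) ≤ ε) (hz : ∀ i, dist (IFSComp f τ i z) (x i) ≤ ε) :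
    y = z :=
  hexp σ τ y z fun i => calc
    _ ≤ dist (IFSComp f σ i y) (x i) + dist (IFSComp f τ i z) (x i) := dist_triangle_right _ _ _
    _ ≤ ε + ε := add_le_add (hy i) (hz i)
    _ < e := by linarith

lemma exists_shadow_of_tendsto [Finite Λ] {ι : Type*} (U : Ultrafilter ι) {ε : ℝ}
    {xs : ι → ℤ → X} {σs : ι → ℤ → Λ} {ys : ι → X} {x : ℤ → X} {y : X}
    (hx : ∀ i, Tendsto (fun n => xs n i) U (𝓝 (x i))) (hy : Tendsto ys U (𝓝 y))
    (hs : ∀ n i, dist (IFSComp f (σs n) i (ys n)) (xs n i) ≤ ε) :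
    ∃ τ : ℤ → Λ, ∀ i, dist (IFSComp f τ i y) (x i) ≤ ε := by
  have hσ : ∀ j, ∃ a, ∀ᶠ n in (U : Filter ι), σs n j = a := fun j =>
    Ultrafilter.eventually_exists_iff.1 (Eventually.of_forall fun n => ⟨_, rfl⟩)
  choose τ hτ using hσ
  refine ⟨τ, fun i => ?_⟩
  have hlim := ((continuous_IFSComp f τ i).tendsto y).comp hy |>.dist (hx i)
  refine le_of_tendsto hlim ?_
  filter_upwards [(Filter.biInter_finset_mem _).2 fun j _ => hτ j] with n hn
  rw [← IFSComp_congr f i fun j hj => Set.mem_iInter₂.1 hn j hj]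
  exact hs n i

end Shadowing

theorem stmt_16_general {X Λ : Type*} [MetricSpace X] [CompactSpace X] [Finite Λ]
    (f : Λ → X ≃ₜ X) (e : ℝ) (hexp : StronglyExpansiveWith f e)
    (ε δ : ℝ) (hε0 : 0 < ε) (hεe : ε < e / 3)
    (hsh : ∀ (x : ℤ → X) (σ : ℤ → Λ), IsPseudoOrbit f δ x σ →
      ∃ y : X, ∀ i : ℤ, dist (IFSComp f σ i y) (x i) ≤ ε) :
    ∃ r : {p : (ℤ → X) × (ℤ → Λ) // IsPseudoOrbit f δ p.1 p.2} → X,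
      (∀ p, ∀ i : ℤ, dist (IFSComp f p.val.2 i (r p)) (p.val.1 i) ≤ ε) ∧
      (∀ p (y : X), (∀ i : ℤ, dist (IFSComp f p.val.2 i y) (p.val.1 i) ≤ ε) → y = r p) ∧
      (∀ p, ∀ α > (0 : ℝ), ∃ β > (0 : ℝ), ∀ q, dTilde p.val.1 q.val.1 < β →
        dist (r p) (r q) < α) := by
  have h2ε : 2 * ε < e := by linarith
  choose r hr using fun p : {p : (ℤ → X) × (ℤ → Λ) // IsPseudoOrbit f δ p.1 p.2} =>
    hsh p.val.1 p.val.2 p.prop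
  refine ⟨r, hr, fun p y hy => hexp.eq_of_shadow h2ε hy (hr p), fun p α hα => ?_⟩
  have hlim : Tendsto r (comap (fun q => dTilde p.val.1 q.val.1) (𝓝 0)) (𝓝 (r p)) := by
    refine (tendsto_iff_ultrafilter _ _ _).2 fun U hU => ?_
    obtain ⟨z, -, hz⟩ := isCompact_univ.ultrafilter_le_nhds (U.map r) (by simp)
    have hxs := tendsto_apply_of_tendsto_dTilde (tendsto_comap.mono_left hU)
    obtain ⟨τ, hτ⟩ := exists_shadow_of_tendsto U hxs hz hr
    rwa [hexp.eq_of_shadow h2ε hτ (hr p)] at hz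
  obtain ⟨β, hβ, hβα⟩ := ((nhds_basis_ball.comap _).tendsto_iff nhds_basis_ball).1 hlim α hα
  refine ⟨β, hβ, fun q hq => ?_⟩
  have := hβα q (by simpa [abs_of_nonneg (dTilde_nonneg _ _)] using hq)
  rwa [mem_ball, dist_comm] at this

/-- For a strongly expansive IFS with the shadowing property, the shadowing
map r on δ-pseudo orbits is well-defined (unique shadowing point) and continuous with
respect to the metric d̃. -/
theorem stmt_16 {X Λ : Type*} [MetricSpace X] [CompactSpace X] [Finite Λ] [Nonempty Λ]
    (f : Λ → X ≃ₜ X) (e : ℝ) (he : 0 < e) (hexp : StronglyExpansiveWith f e)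
    (ε δ : ℝ) (hε0 : 0 < ε) (hεe : ε < e / 3) (hδ : 0 < δ)
    (hsh : ∀ (x : ℤ → X) (σ : ℤ → Λ), IsPseudoOrbit f δ x σ →
      ∃ y : X, ∀ i : ℤ, dist (IFSComp f σ i y) (x i) ≤ ε) :
    ∃ r : {p : (ℤ → X) × (ℤ → Λ) // IsPseudoOrbit f δ p.1 p.2} → X,
      (∀ p, ∀ i : ℤ, dist (IFSComp f p.val.2 i (r p)) (p.val.1 i) ≤ ε) ∧
      (∀ p (y : X), (∀ i : ℤ, dist (IFSComp f p.val.2 i y) (p.val.1 i) ≤ ε) → y = r p) ∧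
      (∀ p, ∀ α > (0 : ℝ), ∃ β > (0 : ℝ), ∀ q, dTilde p.val.1 q.val.1 < β →
        dist (r p) (r q) < α) :=
  stmt_16_general f e hexp ε δ hε0 hεe hsh
end
end
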